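/- Let A be a max-plus automaton over alphabet Σ in which all states are both initial and final, defined by μ: Σ → M_d(Z_max), and let Γ = { μ(a) : a ∈ Σ } (Σ finite and nonempty). Then the following are equivalent: (1) [[A]](w) ≥ 0 for every nonempty word w; (2) every matrix M in the semigroup generated by Γ satisfies ‖M‖_∞ ≥ 0; (3) every matrix M in the semigroup generated by Γ satisfies ρ(M) ≥ 0; (4) the joint spectral radius ρ(Γ) ≥ 0. -/

import Mathlib

open Filter

/-- The tropical (max-plus) semiring ℤ ∪ {-∞}: addition is max (lattice sup),
`+` is the tropical product with `⊥` absorbing. -/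
abbrev Zmax : Type := WithBot ℤ

/-- Square matrices over `Zmax`. -/
abbrev Mat (d : ℕ) : Type := Fin d → Fin d → Zmax

/-- Tropical matrix product: `(A⊗B) i j = max_k (A i k + B k j)`. -/
def tmul {d : ℕ} (A B : Mat d) : Mat d :=
  fun i j => Finset.univ.sup fun k => A i k + B k j

/-- Maximal entry of a matrix (`-∞` for the all-`⊥` matrix). -/
def tnorm {d : ℕ} (M : Mat d) : Zmax :=
  Finset.univ.sup fun i => Finset.univ.sup fun j => M i j

/-- Product of a list of matrices (junk value, the all-`⊥` matrix, on `[]`;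
only used on nonempty lists). -/
def prodL {d : ℕ} : List (Mat d) → Mat d
  | [] => fun _ _ => ⊥
  | [M] => M
  | M :: N :: L => tmul M (prodL (N :: L))

/-- Tropical identity matrix. -/
def tId (d : ℕ) : Mat d := fun i j => if i = j then (0 : Zmax) else ⊥

/-- Tropical matrix power. -/
def tpow {d : ℕ} (M : Mat d) : ℕ → Mat d
  | 0 => tId d
  | n+1 => tmul M (tpow M n)

/-- The subsemigroup generated by a set of matrices: all nonempty finite products. -/
def semi {d : ℕ} (Γ : Set (Mat d)) : Set (Mat d) :=
  {M | ∃ L : List (Mat d), L ≠ [] ∧ (∀ N ∈ L, N ∈ Γ) ∧ prodL L = M}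

/-- Embedding of `Zmax = ℤ ∪ {-∞}` into `EReal`. -/
noncomputable def z2e (x : Zmax) : EReal :=
  WithBot.recBotCoe ⊥ (fun n : ℤ => ((n : ℝ) : EReal)) x

/-- `minNorm Γ ℓ` is the minimum over all products of `ℓ` matrices from `Γ`
of `‖M₁⋯M_ℓ‖_∞ / ℓ`, as an extended real. -/
noncomputable def minNorm {d : ℕ} (Γ : Set (Mat d)) (ℓ : ℕ) : EReal :=
  sInf {x | ∃ L : List (Mat d), L.length = ℓ ∧ (∀ N ∈ L, N ∈ Γ) ∧
    x = z2e (tnorm (prodL L)) / (ℓ : EReal)}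

/-- Joint spectral radius: `inf_{ℓ>0} min{ ‖M₁⋯M_ℓ‖_∞/ℓ : Mᵢ ∈ Γ }`. -/
noncomputable def jsr {d : ℕ} (Γ : Set (Mat d)) : EReal :=
  ⨅ (ℓ : ℕ) (_ : 0 < ℓ), minNorm Γ ℓ

/-- Weight of the cycle `c 0 → c 1 → ⋯ → c ℓ → c 0` (length `ℓ+1`),
addition of `Fin (ℓ+1)` being cyclic. -/
def cycWeight {d : ℕ} (M : Mat d) {ℓ : ℕ} (c : Fin (ℓ+1) → Fin d) : Zmax :=
  ∑ k : Fin (ℓ+1), M (c k) (c (k+1))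

/-- Tropical spectral radius of a single matrix: the maximal average weight of
cycles in the graph of `M` (and `-∞` if there is no cycle of finite weight). -/
noncomputable def rho {d : ℕ} (M : Mat d) : EReal :=
  ⨆ (ℓ : ℕ) (c : Fin (ℓ+1) → Fin d), z2e (cycWeight M c) / ((ℓ+1 : ℕ) : EReal)

/-- A critical cycle: a cycle with finite weight whose average weight is `rho M`. -/
def IsCritCycle {d : ℕ} (M : Mat d) {ℓ : ℕ} (c : Fin (ℓ+1) → Fin d) : Prop :=
  cycWeight M c ≠ ⊥ ∧ z2e (cycWeight M c) / ((ℓ+1 : ℕ) : EReal) = rho M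

/-- Edges of the critical graph: edges lying on some critical cycle. -/
def critEdge {d : ℕ} (M : Mat d) (i j : Fin d) : Prop :=
  ∃ (ℓ : ℕ) (c : Fin (ℓ+1) → Fin d) (k : Fin (ℓ+1)),
    IsCritCycle M c ∧ c k = i ∧ c (k+1) = j

/-- Vertices of the critical graph. -/
def critVertex {d : ℕ} (M : Mat d) (i : Fin d) : Prop :=
  ∃ j, critEdge M i j ∨ critEdge M j i

/-- Strongly connected components of the critical graph: maximal sets of critical
vertices that are pairwise connected by paths in the critical graph. -/
def IsSCC {d : ℕ} (M : Mat d) (S : Set (Fin d)) : Prop :=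
  (∀ i ∈ S, critVertex M i) ∧
  (∀ i ∈ S, ∀ j ∈ S, Relation.ReflTransGen (critEdge M) i j) ∧
  (∀ T : Set (Fin d), S ⊆ T → (∀ i ∈ T, critVertex M i) →
    (∀ i ∈ T, ∀ j ∈ T, Relation.ReflTransGen (critEdge M) i j) → T = S)

/-- Greatest common divisor of a set of natural numbers. -/
noncomputable def setGcd (A : Set ℕ) : ℕ :=
  sInf {g | (∀ a ∈ A, g ∣ a) ∧ ∀ h, (∀ a ∈ A, h ∣ a) → h ∣ g}

/-- Cyclicity of a strongly connected component `S` of the critical graph of `M`: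
the gcd of the lengths of the cycles of the critical graph lying in `S`. -/
noncomputable def cyclicity {d : ℕ} (M : Mat d) (S : Set (Fin d)) : ℕ :=
  setGcd {n | ∃ (ℓ : ℕ) (c : Fin (ℓ+1) → Fin d), n = ℓ + 1 ∧
    (∀ k, critEdge M (c k) (c (k+1))) ∧ (∀ k, c k ∈ S)}

/-- Ultimate rank of a matrix: the sum of the cyclicities of the strongly
connected components of its critical graph. -/
noncomputable def urk {d : ℕ} (M : Mat d) : ℕ :=
  ∑ᶠ (S : Set (Fin d)) (_ : IsSCC M S), cyclicity M S

/-- `k ⊙ M`: add the integer `k` to every entry. -/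
def kadd {d : ℕ} (k : ℤ) (M : Mat d) : Mat d := fun i j => (k : Zmax) + M i j

/-- Value `I M F` computed from an initial row vector, a matrix and a final
column vector. -/
def runVal {d : ℕ} (I : Fin d → Zmax) (M : Mat d) (F : Fin d → Zmax) : Zmax :=
  Finset.univ.sup fun i => Finset.univ.sup fun j => I i + M i j + F j

/-!
With zero initial and final vectors the automaton computes `‖μ(w)‖_∞`, whence (1) ⇔ (2), and
(2) ⇔ (4) is immediate from the definition of the joint spectral radius. A cycle's mean weight is
at most the largest entry, so `ρ(M) ≤ ‖M‖_∞` and (3) ⇒ (2).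

Conversely, if `ρ(M) < 0` then, the weights being integers, every closed walk in the graph of `M`
weighs at most `-1`. Among the first `d + 1` vertices of a walk two coincide, so a closed subwalk of
length at most `d` can be cut out; repeating this shows that a walk of length `n` weighs at most
`d K - ⌊n / d⌋`, where `K ≥ 0` bounds the entries of `M`. Hence `‖M^n‖_∞ < 0` for large `n`,
although `M^n` lies in the semigroup.
-/

open Finset Fin.NatCast

section
variable {d : ℕ}

lemma Zmax.finset_sup_add {ι : Type*} (s : Finset ι) (f : ι → Zmax) (a : Zmax) :
    s.sup f + a = s.sup fun x => f x + a :=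
  apply_sup_eq_sup_comp (· + a) (fun _ _ => (add_left_mono (α := Zmax) (a := a)).map_max)
    (by simp)

lemma Zmax.add_finset_sup {ι : Type*} (s : Finset ι) (f : ι → Zmax) (a : Zmax) :
    a + s.sup f = s.sup fun x => a + f x :=
  apply_sup_eq_sup_comp (a + ·) (fun _ _ => (add_right_mono (α := Zmax) (a := a)).map_max)
    (by simp)

lemma Zmax.lt_zero_iff_le_neg_one {x : Zmax} : x < 0 ↔ x ≤ ((-1 : ℤ) : Zmax) := by
  induction x using WithBot.recBotCoe with
  | bot => simp
  | coe m =>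
    rw [← WithBot.coe_zero, WithBot.coe_lt_coe, WithBot.coe_le_coe]
    omega

lemma z2e_coe (m : ℤ) : z2e (m : Zmax) = ((m : ℝ) : EReal) := rfl

lemma z2e_mono : Monotone z2e := by
  intro x y h
  induction x using WithBot.recBotCoe with
  | bot => exact bot_le
  | coe m =>
    induction y using WithBot.recBotCoe with
    | bot => simp at h
    | coe n => rw [z2e_coe, z2e_coe]; exact_mod_cast WithBot.coe_le_coe.mp h

lemma z2e_nonneg_iff {x : Zmax} : 0 ≤ z2e x ↔ 0 ≤ x := by
  induction x using WithBot.recBotCoe with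
  | bot => simp [z2e]
  | coe m => rw [z2e_coe, EReal.coe_nonneg, ← WithBot.coe_zero, WithBot.coe_le_coe]; norm_cast

lemma z2e_nsmul (n : ℕ) (x : Zmax) : z2e (n • x) = n • z2e x := by
  induction x using WithBot.recBotCoe with
  | bot =>
    cases n with
    | zero => simpa using z2e_coe 0
    | succ n => simp [z2e, succ_nsmul, EReal.nsmul_eq_mul]
  | coe m => rw [← WithBot.coe_nsmul, z2e_coe, z2e_coe]; simp [EReal.nsmul_eq_mul]

lemma EReal.nonneg_div_natCast_iff {x : EReal} {n : ℕ} (hn : 0 < n) : 0 ≤ x / n ↔ 0 ≤ x := by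
  rw [EReal.le_div_iff_mul_le (by exact_mod_cast hn) (EReal.natCast_ne_top n), zero_mul]

lemma tmul_assoc (A B C : Mat d) : tmul (tmul A B) C = tmul A (tmul B C) := by
  funext i j
  simp only [tmul, Zmax.finset_sup_add, Zmax.add_finset_sup, add_assoc]
  exact Finset.sup_comm _ _ _

lemma tmul_tId (M : Mat d) : tmul M (tId d) = M := by
  funext i j
  refine le_antisymm (Finset.sup_le fun k _ => ?_) ?_
  · by_cases h : k = j <;> simp [tId, h]
  · calc M i j = M i j + tId d j j := by simp [tId]
      _ ≤ tmul M (tId d) i j := le_sup (f := fun k => M i k + tId d k j) (mem_univ j)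

lemma le_tnorm (M : Mat d) (i j : Fin d) : M i j ≤ tnorm M :=
  le_sup_of_le (f := fun i => univ.sup fun j => M i j) (mem_univ i)
    (le_sup (f := fun j => M i j) (mem_univ j))

lemma runVal_zero_zero (M : Mat d) : runVal (fun _ => 0) M (fun _ => 0) = tnorm M := by
  simp only [runVal, tnorm, zero_add, add_zero]

lemma prodL_cons (M : Mat d) {L : List (Mat d)} (hL : L ≠ []) :
    prodL (M :: L) = tmul M (prodL L) := by
  cases L with
  | nil => exact absurd rfl hL
  | cons N L => rfl

lemma prodL_append {L₁ L₂ : List (Mat d)} (h₁ : L₁ ≠ []) (h₂ : L₂ ≠ []) :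
    prodL (L₁ ++ L₂) = tmul (prodL L₁) (prodL L₂) := by
  induction L₁ with
  | nil => exact absurd rfl h₁
  | cons M L ih =>
    rcases eq_or_ne L [] with rfl | hL
    · exact prodL_cons M h₂
    · rw [List.cons_append, prodL_cons M (by simp [h₂]), ih hL, prodL_cons M hL, tmul_assoc]

lemma tmul_mem_semi {Γ : Set (Mat d)} {A B : Mat d} (hA : A ∈ semi Γ) (hB : B ∈ semi Γ) :
    tmul A B ∈ semi Γ := by
  obtain ⟨L₁, h₁, hΓ₁, rfl⟩ := hA
  obtain ⟨L₂, h₂, hΓ₂, rfl⟩ := hB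
  refine ⟨L₁ ++ L₂, by simp [h₁], fun N hN => ?_, prodL_append h₁ h₂⟩
  rcases List.mem_append.mp hN with hN | hN
  exacts [hΓ₁ N hN, hΓ₂ N hN]

lemma tpow_succ_mem_semi {Γ : Set (Mat d)} {M : Mat d} (hM : M ∈ semi Γ) (n : ℕ) :
    tpow M (n + 1) ∈ semi Γ := by
  induction n with
  | zero => rwa [tpow, tpow, tmul_tId]
  | succ n ih => exact tmul_mem_semi hM ih

lemma forall_mem_semi_range_iff {α : Type*} (μ : α → Mat d) (P : Mat d → Prop) :
    (∀ M ∈ semi (Set.range μ), P M) ↔ ∀ w : List α, w ≠ [] → P (prodL (w.map μ)) := by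
  refine ⟨fun h w hw => h _ ⟨w.map μ, by simpa using hw, by simp, rfl⟩, ?_⟩
  rintro h _ ⟨L, hL, hΓ, rfl⟩
  obtain ⟨w, rfl⟩ : L ∈ Set.range (List.map μ) := by rwa [Set.range_list_map]
  exact h w (by simpa using hL)

def walkWeight (M : Mat d) (p : ℕ → Fin d) (n : ℕ) : Zmax :=
  ∑ k ∈ range n, M (p k) (p (k + 1))

section walks
variable (M : Mat d)

lemma walkWeight_congr {p q : ℕ → Fin d} {n : ℕ} (h : ∀ k ≤ n, p k = q k) :
    walkWeight M p n = walkWeight M q n :=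
  sum_congr rfl fun k hk => by
    rw [mem_range] at hk
    rw [h k hk.le, h (k + 1) hk]

lemma walkWeight_add (p : ℕ → Fin d) (a b : ℕ) :
    walkWeight M p (a + b) = walkWeight M p a + walkWeight M (fun k => p (a + k)) b := by
  simp only [walkWeight, sum_range_add, add_assoc]

lemma cycWeight_eq_walkWeight {ℓ : ℕ} (c : Fin (ℓ + 1) → Fin d) :
    cycWeight M c = walkWeight M (fun k => c (k : Fin (ℓ + 1))) (ℓ + 1) := by
  rw [cycWeight, walkWeight, ← Fin.sum_univ_eq_sum_range
    (fun k => M (c (k : Fin (ℓ + 1))) (c ((k + 1 : ℕ) : Fin (ℓ + 1))))]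
  simp only [Nat.cast_add, Nat.cast_one, Fin.cast_val_eq_self]

lemma walkWeight_eq_cycWeight {p : ℕ → Fin d} {a ℓ : ℕ} (h : p a = p (a + (ℓ + 1))) :
    walkWeight M (fun k => p (a + k)) (ℓ + 1) =
      cycWeight M (fun k : Fin (ℓ + 1) => p (a + (k : ℕ))) := by
  rw [cycWeight_eq_walkWeight]
  refine walkWeight_congr M fun k hk => ?_
  rcases hk.lt_or_eq with hk | rfl
  · rw [Fin.val_cast_of_lt hk]
  · simp [h]

lemma walkWeight_eq_shortcut_add {p : ℕ → Fin d} {a m : ℕ} (h : p a = p (a + m)) (r : ℕ) :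
    walkWeight M p (a + (m + r)) =
      walkWeight M (fun t => if t < a then p t else p (t + m)) (a + r) +
        walkWeight M (fun k => p (a + k)) m := by
  set q : ℕ → Fin d := fun t => if t < a then p t else p (t + m)
  have hpre : walkWeight M q a = walkWeight M p a := by
    refine walkWeight_congr M fun k hk => ?_
    rcases hk.lt_or_eq with hk | rfl
    · simp [q, hk]
    · simp [q, h]
  have hsuf : (fun k => q (a + k)) = fun k => p (a + m + k) := by
    funext k
    simp only [q, if_neg (Nat.not_lt.mpr (Nat.le_add_right a k))]
    ring_nf
  rw [walkWeight_add M q, hpre, hsuf, walkWeight_add M p, walkWeight_add M (fun k => p (a + k))]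
  simp only [add_assoc]
  abel

lemma exists_tpow_le_walkWeight (n : ℕ) (i j : Fin d) :
    ∃ p : ℕ → Fin d, p 0 = i ∧ tpow M n i j ≤ walkWeight M p n := by
  induction n generalizing i with
  | zero =>
    refine ⟨fun _ => i, rfl, ?_⟩
    by_cases h : i = j <;> simp [tpow, tId, walkWeight, h]
  | succ n ih =>
    have : Nonempty (Fin d) := ⟨i⟩
    obtain ⟨k, -, hk⟩ := exists_mem_eq_sup univ univ_nonempty fun k => M i k + tpow M n k j
    obtain ⟨p, hp0, hp⟩ := ih k
    refine ⟨fun | 0 => i | t + 1 => p t, rfl, ?_⟩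
    calc tpow M (n + 1) i j = M i k + tpow M n k j := hk
      _ ≤ M i (p 0) + walkWeight M p n := by rw [hp0]; gcongr
      _ = walkWeight M (fun | 0 => i | t + 1 => p t) (n + 1) := by
        rw [walkWeight, walkWeight, sum_range_succ', add_comm]

lemma tnorm_tpow_le {n : ℕ} {b : Zmax} (h : ∀ p, walkWeight M p n ≤ b) :
    tnorm (tpow M n) ≤ b :=
  Finset.sup_le fun i _ => Finset.sup_le fun j _ =>
    let ⟨p, _, hp⟩ := exists_tpow_le_walkWeight M n i j
    hp.trans (h p)

end walks

lemma exists_apply_eq_apply_add_succ_le (p : ℕ → Fin d) :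
    ∃ a ℓ : ℕ, a + (ℓ + 1) ≤ d ∧ p a = p (a + (ℓ + 1)) := by
  obtain ⟨x, y, hxy, hp⟩ :=
    Fintype.exists_ne_map_eq_of_card_lt (fun t : Fin (d + 1) => p t) (by simp)
  rcases Nat.lt_or_gt_of_ne (Fin.val_ne_of_ne hxy) with h | h
  · exact ⟨x, y - x - 1, by omega, by convert hp using 2; omega⟩
  · exact ⟨y, x - y - 1, by omega, by convert hp.symm using 2; omega⟩

lemma walkWeight_le_of_cycWeight_le {M : Mat d} {K : ℕ} (hM : ∀ i j, M i j ≤ (K : ℤ))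
    (hcyc : ∀ ℓ (c : Fin (ℓ + 1) → Fin d), cycWeight M c ≤ ((-1 : ℤ) : Zmax))
    (n : ℕ) (p : ℕ → Fin d) :
    walkWeight M p n ≤ ((d * K - (n / d : ℕ) : ℤ) : Zmax) := by
  induction n using Nat.strong_induction_on generalizing p with
  | _ n ih =>
  rcases lt_or_ge n d with hn | hn
  · calc walkWeight M p n ≤ #(range n) • ((K : ℤ) : Zmax) :=
          sum_le_card_nsmul _ _ _ fun k _ => hM _ _
      _ ≤ ((d * K - (n / d : ℕ) : ℤ) : Zmax) := by
          rw [card_range, ← WithBot.coe_nsmul, WithBot.coe_le_coe, Nat.div_eq_of_lt hn,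
            nsmul_eq_mul]
          push_cast
          nlinarith
  · obtain ⟨a, ℓ, had, hp⟩ := exists_apply_eq_apply_add_succ_le p
    obtain ⟨r, rfl⟩ : ∃ r, n = a + ((ℓ + 1) + r) := ⟨n - a - (ℓ + 1), by omega⟩
    rw [walkWeight_eq_shortcut_add M hp, walkWeight_eq_cycWeight M hp]
    calc _ ≤ ((d * K - ((a + r) / d : ℕ) : ℤ) : Zmax) + ((-1 : ℤ) : Zmax) :=
          add_le_add (ih _ (by omega) _) (hcyc _ _)
      _ ≤ _ := by
          rw [← WithBot.coe_add, WithBot.coe_le_coe]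
          have : (a + ((ℓ + 1) + r)) / d ≤ (a + r) / d + 1 := by
            rw [← Nat.add_div_right _ (by omega)]
            exact Nat.div_le_div_right (by omega)
          omega

lemma rho_le_tnorm (M : Mat d) : rho M ≤ z2e (tnorm M) := by
  refine iSup₂_le fun ℓ c => ?_
  have hpos : (0 : EReal) < ((ℓ + 1 : ℕ) : EReal) := by exact_mod_cast ℓ.succ_pos
  rw [EReal.div_le_iff_le_mul hpos (EReal.natCast_ne_top _), ← EReal.nsmul_eq_mul, ← z2e_nsmul]
  refine z2e_mono ?_
  simpa [cycWeight] using
    sum_le_card_nsmul (univ : Finset (Fin (ℓ + 1))) _ (tnorm M) fun k _ => le_tnorm M _ _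

lemma cycWeight_le_neg_one_of_rho_neg {M : Mat d} (h : rho M < 0) {ℓ : ℕ}
    (c : Fin (ℓ + 1) → Fin d) : cycWeight M c ≤ ((-1 : ℤ) : Zmax) := by
  rw [← Zmax.lt_zero_iff_le_neg_one]
  by_contra! hc
  have hmean : 0 ≤ z2e (cycWeight M c) / ((ℓ + 1 : ℕ) : EReal) :=
    (EReal.nonneg_div_natCast_iff ℓ.succ_pos).mpr (z2e_nonneg_iff.mpr hc)
  exact h.not_ge (hmean.trans (le_iSup₂ (f := fun ℓ (c : Fin (ℓ + 1) → Fin d) =>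
    z2e (cycWeight M c) / ((ℓ + 1 : ℕ) : EReal)) ℓ c))

lemma rho_nonneg_of_tnorm_tpow_nonneg {M : Mat d} (h : ∀ n, 0 ≤ tnorm (tpow M (n + 1))) :
    0 ≤ rho M := by
  by_contra! hρ
  have hM : 0 ≤ tnorm M := by simpa [tpow, tmul_tId] using h 0
  have hd : 0 < d := Nat.pos_of_ne_zero fun hd => by subst hd; simp [tnorm] at hM
  obtain ⟨K, hK⟩ : ∃ K : ℕ, tnorm M ≤ (K : ℤ) := by
    induction htn : tnorm M using WithBot.recBotCoe with
    | bot => simp [htn] at hM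
    | coe k => exact ⟨k.toNat, WithBot.coe_le_coe.mpr (Int.self_le_toNat k)⟩
  set n := d * (d * K + 1) + 1
  have hbound : tnorm (tpow M n) ≤ ((d * K - (n / d : ℕ) : ℤ) : Zmax) :=
    tnorm_tpow_le M fun p =>
      walkWeight_le_of_cycWeight_le (fun i j => (le_tnorm M i j).trans hK)
        (fun _ c => cycWeight_le_neg_one_of_rho_neg hρ c) n p
  have hn : d * K + 1 ≤ n / d := (Nat.le_div_iff_mul_le hd).mpr (by rw [mul_comm]; omega)
  have h0 := (h _).trans hbound
  rw [← WithBot.coe_zero, WithBot.coe_le_coe] at h0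
  push_cast at h0
  omega

lemma forall_tnorm_nonneg_iff_forall_rho_nonneg (Γ : Set (Mat d)) :
    (∀ M ∈ semi Γ, 0 ≤ tnorm M) ↔ ∀ M ∈ semi Γ, 0 ≤ rho M :=
  ⟨fun h _ hM => rho_nonneg_of_tnorm_tpow_nonneg fun n => h _ (tpow_succ_mem_semi hM n),
    fun h M hM => z2e_nonneg_iff.mp ((h M hM).trans (rho_le_tnorm M))⟩

lemma forall_tnorm_nonneg_iff_jsr_nonneg (Γ : Set (Mat d)) :
    (∀ M ∈ semi Γ, 0 ≤ tnorm M) ↔ 0 ≤ jsr Γ := by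
  constructor
  · intro h
    refine le_iInf₂ fun ℓ hℓ => le_sInf ?_
    rintro _ ⟨L, rfl, hΓ, rfl⟩
    have hL : L ≠ [] := List.ne_nil_of_length_pos hℓ
    exact (EReal.nonneg_div_natCast_iff hℓ).mpr (z2e_nonneg_iff.mpr (h _ ⟨L, hL, hΓ, rfl⟩))
  · rintro h _ ⟨L, hL, hΓ, rfl⟩
    have hℓ : 0 < L.length := List.length_pos_iff.mpr hL
    have hmin : jsr Γ ≤ z2e (tnorm (prodL L)) / (L.length : EReal) :=
      (iInf₂_le _ hℓ).trans (sInf_le ⟨L, rfl, hΓ, rfl⟩)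
    exact z2e_nonneg_iff.mp ((EReal.nonneg_div_natCast_iff hℓ).mp (h.trans hmin))

end

theorem stmt_8_general {α : Type} {d : ℕ} (μ : α → Mat d)
    (I F : Fin d → Zmax) (hI : ∀ i, I i = 0) (hF : ∀ j, F j = 0) :
    ((∀ w : List α, w ≠ [] → (0 : Zmax) ≤ runVal I (prodL (w.map μ)) F) ↔
      (∀ M ∈ semi (Set.range μ), (0 : Zmax) ≤ tnorm M)) ∧
    ((∀ M ∈ semi (Set.range μ), (0 : Zmax) ≤ tnorm M) ↔
      (∀ M ∈ semi (Set.range μ), (0 : EReal) ≤ rho M)) ∧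
    ((∀ M ∈ semi (Set.range μ), (0 : EReal) ≤ rho M) ↔
      (0 : EReal) ≤ jsr (Set.range μ)) := by
  obtain rfl : I = fun _ => 0 := funext hI
  obtain rfl : F = fun _ => 0 := funext hF
  have h23 := forall_tnorm_nonneg_iff_forall_rho_nonneg (Set.range μ)
  refine ⟨?_, h23, h23.symm.trans (forall_tnorm_nonneg_iff_jsr_nonneg _)⟩
  simp only [runVal_zero_zero, forall_mem_semi_range_iff μ (fun M => 0 ≤ tnorm M)]

theorem stmt_8 {α : Type} [Fintype α] [Nonempty α] {d : ℕ} (μ : α → Mat d)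
    (I F : Fin d → Zmax) (hI : ∀ i, I i = 0) (hF : ∀ j, F j = 0) :
    ((∀ w : List α, w ≠ [] → (0 : Zmax) ≤ runVal I (prodL (w.map μ)) F) ↔
      (∀ M ∈ semi (Set.range μ), (0 : Zmax) ≤ tnorm M)) ∧
    ((∀ M ∈ semi (Set.range μ), (0 : Zmax) ≤ tnorm M) ↔
      (∀ M ∈ semi (Set.range μ), (0 : EReal) ≤ rho M)) ∧
    ((∀ M ∈ semi (Set.range μ), (0 : EReal) ≤ rho M) ↔
      (0 : EReal) ≤ jsr (Set.range μ)) :=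
  stmt_8_general μ I F hI hF
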